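/- arXiv:2404.19461 — 5 statements merged into one kernel-verified Lean document; each statement's English description precedes it below -/
import Mathlib

section
/- Let (p_k) be a sequence of real numbers with p_1 ≥ 2 such that for every k, p_k^3 ≤ p_{k+1} < (p_k + 1)^3 - 1. Then the sequence (p_k^{1/3^k}) is nondecreasing, the sequence ((p_k+1)^{1/3^k}) is strictly decreasing, and p_k^{1/3^k} < (p_j+1)^{1/3^j} for all k, j. -/
/-! Since `x ^ (1 / 3 ^ k) = (x ^ 3) ^ (1 / 3 ^ (k + 1))`, taking `3 ^ (k + 1)`-th roots in
`p k ^ 3 ≤ p (k + 1)` and `p (k + 1) + 1 < (p k + 1) ^ 3` gives the two monotonicity claims.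
Each lower term `p k ^ (1 / 3 ^ k)` lies below the upper term `(p k + 1) ^ (1 / 3 ^ k)` of the
same index, and a nondecreasing sequence lying termwise below a nonincreasing one lies below
every term of it. -/

open Real

lemma rpow_one_div_three_pow_eq_cube {x : ℝ} (hx : 0 ≤ x) (k : ℕ) :
    x ^ ((1 : ℝ) / 3 ^ k) = (x ^ 3) ^ ((1 : ℝ) / 3 ^ (k + 1)) := by
  rw [← rpow_natCast x 3, ← rpow_mul hx]
  congr 1
  push_cast
  field_simp
  ring

lemma lt_of_monotoneOn_of_antitoneOn {α β : Type*} [LinearOrder α] [Preorder β] {f g : α → β}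
    {s : Set α} (hf : MonotoneOn f s) (hg : AntitoneOn g s) (hfg : ∀ n ∈ s, f n < g n) :
    ∀ k ∈ s, ∀ j ∈ s, f k < g j := by
  intro k hk j hj
  rcases le_total k j with hkj | hjk
  · exact (hf hk hj hkj).trans_lt (hfg j hj)
  · exact (hfg k hk).trans_le (hg hj hk hjk)

lemma nonneg_of_pow_three_le_succ {p : ℕ → ℝ} (h1 : 0 ≤ p 1)
    (hp : ∀ k ≥ 1, p k ^ 3 ≤ p (k + 1)) : ∀ k ≥ 1, 0 ≤ p k := by
  intro k hk
  induction k, hk using Nat.le_induction with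
  | base => exact h1
  | succ n hn ih => exact (pow_nonneg ih 3).trans (hp n hn)

theorem stmt1 (p : ℕ → ℝ) (hp1 : 2 ≤ p 1)
    (hrec : ∀ k ≥ 1, p k ^ 3 ≤ p (k + 1) ∧ p (k + 1) < (p k + 1) ^ 3 - 1) :
    (∀ k ≥ 1, p k ^ ((1 : ℝ) / 3 ^ k) ≤ p (k + 1) ^ ((1 : ℝ) / 3 ^ (k + 1))) ∧
    (∀ k ≥ 1, (p (k + 1) + 1) ^ ((1 : ℝ) / 3 ^ (k + 1)) < (p k + 1) ^ ((1 : ℝ) / 3 ^ k)) ∧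
    (∀ k ≥ 1, ∀ j ≥ 1, p k ^ ((1 : ℝ) / 3 ^ k) < (p j + 1) ^ ((1 : ℝ) / 3 ^ j)) := by
  have hp : ∀ k ≥ 1, 0 ≤ p k :=
    nonneg_of_pow_three_le_succ (by linarith) fun k hk ↦ (hrec k hk).1
  have hlower : ∀ k ≥ 1, p k ^ ((1 : ℝ) / 3 ^ k) ≤ p (k + 1) ^ ((1 : ℝ) / 3 ^ (k + 1)) := by
    intro k hk
    rw [rpow_one_div_three_pow_eq_cube (hp k hk)]
    exact rpow_le_rpow (pow_nonneg (hp k hk) 3) (hrec k hk).1 (by positivity)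
  have hupper : ∀ k ≥ 1,
      (p (k + 1) + 1) ^ ((1 : ℝ) / 3 ^ (k + 1)) < (p k + 1) ^ ((1 : ℝ) / 3 ^ k) := by
    intro k hk
    rw [rpow_one_div_three_pow_eq_cube (by linarith [hp k hk] : 0 ≤ p k + 1)]
    refine rpow_lt_rpow (by linarith [hp (k + 1) (by omega)]) ?_ (by positivity)
    linarith [(hrec k hk).2]
  refine ⟨hlower, hupper, ?_⟩
  exact lt_of_monotoneOn_of_antitoneOn (monotoneOn_nat_Ici_of_le_succ hlower)
    (antitoneOn_nat_Ici_of_succ_le fun k hk ↦ (hupper k hk).le)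
    fun k hk ↦ rpow_lt_rpow (hp k hk) (lt_add_one _) (by positivity)
end

section
/- Let (p_k) be a sequence of integers with p_k ≥ 2 for all k such that p_k^3 ≤ p_{k+1} < (p_k+1)^3 - 1 for every k ≥ 1. Then w := lim_{k→∞} p_k^{1/3^k} exists, satisfies w > 1, and ⌊w^{3^k}⌋ = p_k for every k ≥ 1. -/
/-!
Taking a cube and a `3^(k+1)`-th root turns `p_k^3 ≤ p_{k+1}` into
`p_k ^ (1/3^k) ≤ p_{k+1} ^ (1/3^(k+1))`, and `p_{k+1} + 1 < (p_k + 1)^3` into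
`(p_{k+1} + 1) ^ (1/3^(k+1)) < (p_k + 1) ^ (1/3^k)`. So the lower roots increase, the upper roots
decrease strictly, and the supremum `w` of the lower roots lies in every interval
`[p_k ^ (1/3^k), (p_k + 1) ^ (1/3^k))`, the strict decrease making it open on the right. Raising to the power `3^k` gives `p_k ≤ w^(3^k) < p_k + 1`.
-/

open Filter Topology Set

section RpowOneDivPow

variable {x : ℝ} {n : ℕ}

lemma rpow_one_div_pow_pow (hx : 0 ≤ x) (hn : n ≠ 0) (k : ℕ) :
    (x ^ ((1 : ℝ) / (n : ℝ) ^ k)) ^ (n ^ k) = x := by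
  rw [one_div, ← Nat.cast_pow, Real.rpow_inv_natCast_pow hx (pow_ne_zero k hn)]

lemma pow_rpow_one_div_pow_succ (hx : 0 ≤ x) (hn : n ≠ 0) (k : ℕ) :
    (x ^ n) ^ ((1 : ℝ) / (n : ℝ) ^ (k + 1)) = x ^ ((1 : ℝ) / (n : ℝ) ^ k) := by
  have hn' : (n : ℝ) ≠ 0 := Nat.cast_ne_zero.2 hn
  rw [← Real.rpow_natCast, ← Real.rpow_mul hx]
  congr 1
  field_simp
  ring

end RpowOneDivPow

section Mills

variable {n : ℕ} {a : ℕ → ℝ}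

noncomputable def millsLower (n : ℕ) (a : ℕ → ℝ) (k : ℕ) : ℝ := a k ^ ((1 : ℝ) / (n : ℝ) ^ k)

noncomputable def millsUpper (n : ℕ) (a : ℕ → ℝ) (k : ℕ) : ℝ := (a k + 1) ^ ((1 : ℝ) / (n : ℝ) ^ k)

lemma millsLower_le_succ (hn : n ≠ 0) {k : ℕ} (ha : 0 ≤ a k) (h : a k ^ n ≤ a (k + 1)) :
    millsLower n a k ≤ millsLower n a (k + 1) := by
  rw [millsLower, millsLower, ← pow_rpow_one_div_pow_succ ha hn k]
  exact Real.rpow_le_rpow (by positivity) h (by positivity)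

lemma millsUpper_succ_lt (hn : n ≠ 0) {k : ℕ} (ha : 0 ≤ a k) (ha' : 0 ≤ a (k + 1))
    (h : a (k + 1) + 1 < (a k + 1) ^ n) :
    millsUpper n a (k + 1) < millsUpper n a k := by
  rw [millsUpper, millsUpper, ← pow_rpow_one_div_pow_succ (by linarith : 0 ≤ a k + 1) hn k]
  exact Real.rpow_lt_rpow (by linarith) h (by positivity)

lemma millsLower_lt_millsUpper (hn : n ≠ 0) {k : ℕ} (ha : 0 ≤ a k) :
    millsLower n a k < millsUpper n a k :=
  Real.rpow_lt_rpow ha (lt_add_one _) (by positivity)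

lemma le_pow_of_millsLower_le (hn : n ≠ 0) {k : ℕ} (ha : 0 ≤ a k) {w : ℝ}
    (hw : millsLower n a k ≤ w) : a k ≤ w ^ (n ^ k) := by
  calc a k = millsLower n a k ^ (n ^ k) := (rpow_one_div_pow_pow ha hn k).symm
    _ ≤ w ^ (n ^ k) := pow_le_pow_left₀ (by unfold millsLower; positivity) hw _

lemma pow_lt_of_lt_millsUpper (hn : n ≠ 0) {k : ℕ} (ha : 0 ≤ a k) {w : ℝ} (hw₀ : 0 ≤ w)
    (hw : w < millsUpper n a k) : w ^ (n ^ k) < a k + 1 := by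
  calc w ^ (n ^ k) < millsUpper n a k ^ (n ^ k) := pow_lt_pow_left₀ hw hw₀ (pow_ne_zero k hn)
    _ = a k + 1 := rpow_one_div_pow_pow (by linarith) hn k

theorem exists_tendsto_millsLower (hn : n ≠ 0) (ha : ∀ k ≥ 1, 0 ≤ a k)
    (hlow : ∀ k ≥ 1, a k ^ n ≤ a (k + 1)) (hup : ∀ k ≥ 1, a (k + 1) + 1 < (a k + 1) ^ n) :
    ∃ w, Tendsto (millsLower n a) atTop (𝓝 w) ∧
      ∀ k ≥ 1, millsLower n a k ≤ w ∧ w < millsUpper n a k := by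
  set f := fun k => millsLower n a (k + 1)
  set g := fun k => millsUpper n a (k + 1)
  have ha' (k : ℕ) : 0 ≤ a (k + 1) := ha _ k.succ_pos
  have hf : Monotone f := monotone_nat_of_le_succ fun k =>
    millsLower_le_succ hn (ha' k) (hlow _ k.succ_pos)
  have hg : StrictAnti g := strictAnti_nat_of_succ_lt fun k =>
    millsUpper_succ_lt hn (ha' k) (ha' (k + 1)) (hup _ k.succ_pos)
  have hfg : f ≤ g := fun k => (millsLower_lt_millsUpper hn (ha' k)).le
  have hw := mem_iInter.1 (hf.ciSup_mem_iInter_Icc_of_antitone hg.antitone hfg)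
  have hbdd : BddAbove (range f) := ⟨g 0, forall_mem_range.2 fun k => (hw k).1.trans (hw 0).2⟩
  refine ⟨⨆ k, f k, (tendsto_add_atTop_iff_nat 1).1 (tendsto_atTop_ciSup hf hbdd), ?_⟩
  intro k hk
  obtain ⟨k, rfl⟩ := Nat.exists_eq_add_of_le' hk
  exact ⟨(hw k).1, (hw (k + 1)).2.trans_lt (hg k.lt_succ_self)⟩

end Mills

open Filter in
theorem stmt2 (p : ℕ → ℤ) (hp : ∀ k ≥ 1, 2 ≤ p k)
    (hrec : ∀ k ≥ 1, p k ^ 3 ≤ p (k + 1) ∧ p (k + 1) < (p k + 1) ^ 3 - 1) :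
    ∃ w : ℝ, Tendsto (fun k => (p k : ℝ) ^ ((1 : ℝ) / 3 ^ k)) atTop (nhds w) ∧
      1 < w ∧ ∀ k ≥ 1, ⌊w ^ (3 ^ k : ℕ)⌋ = p k := by
  have hp₀ (k : ℕ) (hk : k ≥ 1) : (0 : ℝ) ≤ p k := by exact_mod_cast (hp k hk).trans' zero_le_two
  obtain ⟨w, hlim, hw⟩ := exists_tendsto_millsLower (n := 3) (a := fun k => (p k : ℝ))
    three_ne_zero hp₀ (fun k hk => by exact_mod_cast (hrec k hk).1)
    (fun k hk => by
      have : p (k + 1) + 1 < (p k + 1) ^ 3 := by linarith [(hrec k hk).2]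
      exact_mod_cast this)
  have hw₁ : 1 < w := by
    refine lt_of_lt_of_le (Real.one_lt_rpow ?_ (by norm_num)) (hw 1 le_rfl).1
    show (1 : ℝ) < p 1
    exact_mod_cast (hp 1 le_rfl).trans_lt' one_lt_two
  unfold millsLower at hlim
  refine ⟨w, by simpa using hlim, hw₁, fun k hk => ?_⟩
  rw [Int.floor_eq_iff]
  exact ⟨le_pow_of_millsLower_le three_ne_zero (hp₀ k hk) (hw k hk).1,
    pow_lt_of_lt_millsUpper three_ne_zero (hp₀ k hk) (by linarith) (hw k hk).2⟩
end

section
/- Let θ = 21/40 and let (p_k) be a sequence of integers with p_k ≥ 2 such that p_k^3 ≤ p_{k+1} ≤ p_k^3 + p_k^{3θ} for every k, and let w = lim p_k^{1/3^k} (which exists). Then there exists γ > 0 such that for every sufficiently large k, |w^{3^k} − p_k| ≤ exp(−3^k γ). -/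
/-!
Put `L n = log p_n / 3^n`, so that `log w = lim L n`. The recursion gives
`0 ≤ L (n+1) - L n ≤ p_n^(3θ-3) / 3^(n+1)`, and since `p_n` increases the tail after `k` sums to
at most `p_k^(3θ-3) / (2·3^k)`. Hence `w^(3^k) = p_k·exp δ` with `0 ≤ δ ≤ p_k^(3θ-3)/2`, so
`|w^(3^k) - p_k| ≤ p_k^(3θ-2)`. As `3θ < 2` and `p_k ≥ 2^(3^(k-1))`, this decays doubly
exponentially.
-/

open Filter Topology Real

lemma log_le_three_mul_log_add_rpow_neg {a b ε : ℝ} (ha : 0 < a) (hb : 0 < b)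
    (hab : b ≤ a ^ 3 + a ^ (3 - ε)) : log b ≤ 3 * log a + a ^ (-ε) := by
  have hsplit : a ^ 3 + a ^ (3 - ε) = a ^ 3 * (1 + a ^ (-ε)) := by
    rw [mul_add, mul_one, sub_eq_add_neg, rpow_add ha, rpow_ofNat]
  have hpos : 0 < 1 + a ^ (-ε) := by positivity
  calc log b ≤ log (a ^ 3 * (1 + a ^ (-ε))) := log_le_log hb (hsplit ▸ hab)
    _ = 3 * log a + log (1 + a ^ (-ε)) := by
      rw [log_mul (by positivity) hpos.ne', log_pow]; push_cast; ring
    _ ≤ 3 * log a + a ^ (-ε) := by linarith [log_le_sub_one_of_pos hpos]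

lemma pow_three_pow_le {a : ℕ → ℝ} {c : ℝ} {k : ℕ} (hc : 0 ≤ c) (hck : c ≤ a k)
    (hlow : ∀ n ≥ k, a n ^ 3 ≤ a (n + 1)) (n : ℕ) : c ^ 3 ^ n ≤ a (k + n) := by
  induction n with
  | zero => simpa using hck
  | succ n ih =>
    calc c ^ 3 ^ (n + 1) = (c ^ 3 ^ n) ^ 3 := by rw [pow_succ, pow_mul]
      _ ≤ a (k + n) ^ 3 := by gcongr
      _ ≤ a (k + (n + 1)) := hlow _ (Nat.le_add_right k n)

section TailEstimate

variable {a : ℕ → ℝ} {ε : ℝ} {k : ℕ}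

lemma le_of_pow_three_le_succ (ha : ∀ n ≥ k, 1 ≤ a n) (hlow : ∀ n ≥ k, a n ^ 3 ≤ a (n + 1))
    {n : ℕ} (hn : k ≤ n) : a k ≤ a n := by
  induction n, hn using Nat.le_induction with
  | base => rfl
  | succ n hn ih => exact ih.trans ((le_self_pow₀ (ha n hn) three_ne_zero).trans (hlow n hn))

lemma log_div_three_pow_bounds (hε : 0 ≤ ε) (ha : ∀ n ≥ k, 1 ≤ a n)
    (hlow : ∀ n ≥ k, a n ^ 3 ≤ a (n + 1)) (hup : ∀ n ≥ k, a (n + 1) ≤ a n ^ 3 + a n ^ (3 - ε))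
    {n : ℕ} (hn : k ≤ n) :
    log (a k) / 3 ^ k ≤ log (a n) / 3 ^ n ∧
      log (a n) / 3 ^ n ≤ log (a k) / 3 ^ k + a k ^ (-ε) * (1 / 3 ^ k - 1 / 3 ^ n) / 2 := by
  induction n, hn using Nat.le_induction with
  | base => simp
  | succ n hn ih =>
    have han : 0 < a n := zero_lt_one.trans_le (ha n hn)
    have hlog_lower : 3 * log (a n) ≤ log (a (n + 1)) := by
      simpa [log_pow] using log_le_log (by positivity) (hlow n hn)
    have hlog_upper := log_le_three_mul_log_add_rpow_neg han
      (zero_lt_one.trans_le (ha _ (hn.trans n.le_succ))) (hup n hn)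
    have hdecay : a n ^ (-ε) ≤ a k ^ (-ε) :=
      rpow_le_rpow_of_nonpos (zero_lt_one.trans_le (ha k le_rfl))
        (le_of_pow_three_le_succ ha hlow hn) (neg_nonpos.mpr hε)
    obtain ⟨ih_lower, ih_upper⟩ := ih
    constructor
    · calc log (a k) / 3 ^ k ≤ log (a n) / 3 ^ n := ih_lower
        _ = 3 * log (a n) / 3 ^ (n + 1) := by rw [pow_succ]; field_simp
        _ ≤ log (a (n + 1)) / 3 ^ (n + 1) := by gcongr
    · have hgeom : a k ^ (-ε) / 3 ^ (n + 1) = a k ^ (-ε) * (1 / 3 ^ n - 1 / 3 ^ (n + 1)) / 2 := by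
        rw [pow_succ]; field_simp; ring
      calc log (a (n + 1)) / 3 ^ (n + 1) ≤ (3 * log (a n) + a n ^ (-ε)) / 3 ^ (n + 1) := by gcongr
        _ = log (a n) / 3 ^ n + a n ^ (-ε) / 3 ^ (n + 1) := by rw [pow_succ]; field_simp
        _ ≤ log (a n) / 3 ^ n + a k ^ (-ε) / 3 ^ (n + 1) := by gcongr
        _ ≤ log (a k) / 3 ^ k + a k ^ (-ε) * (1 / 3 ^ k - 1 / 3 ^ (n + 1)) / 2 := by
            linarith

lemma three_pow_mul_limit_bounds (hε : 0 ≤ ε) (ha : ∀ n ≥ k, 1 ≤ a n)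
    (hlow : ∀ n ≥ k, a n ^ 3 ≤ a (n + 1)) (hup : ∀ n ≥ k, a (n + 1) ≤ a n ^ 3 + a n ^ (3 - ε))
    {ℓ : ℝ} (hL : Tendsto (fun n => log (a n) / 3 ^ n) atTop (𝓝 ℓ)) :
    log (a k) ≤ 3 ^ k * ℓ ∧ 3 ^ k * ℓ ≤ log (a k) + a k ^ (-ε) / 2 := by
  have h3k : (0 : ℝ) < 3 ^ k := by positivity
  have hC : 0 ≤ a k ^ (-ε) := rpow_nonneg (zero_le_one.trans (ha k le_rfl)) _
  have hbounds := fun n (hn : k ≤ n) => log_div_three_pow_bounds hε ha hlow hup hn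
  have hlower : log (a k) / 3 ^ k ≤ ℓ :=
    ge_of_tendsto hL <| (eventually_ge_atTop k).mono fun n hn => (hbounds n hn).1
  have hupper : ℓ ≤ log (a k) / 3 ^ k + a k ^ (-ε) * (1 / 3 ^ k) / 2 := by
    refine le_of_tendsto hL <| (eventually_ge_atTop k).mono fun n hn => (hbounds n hn).2.trans ?_
    gcongr
    exact sub_le_self _ (by positivity)
  constructor
  · rwa [div_le_iff₀' h3k] at hlower
  · calc 3 ^ k * ℓ ≤ 3 ^ k * (log (a k) / 3 ^ k + a k ^ (-ε) * (1 / 3 ^ k) / 2) := by gcongr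
      _ = log (a k) + a k ^ (-ε) / 2 := by field_simp

lemma abs_pow_three_pow_sub_le (hε : 0 ≤ ε) (ha : ∀ n ≥ k, 1 ≤ a n)
    (hlow : ∀ n ≥ k, a n ^ 3 ≤ a (n + 1)) (hup : ∀ n ≥ k, a (n + 1) ≤ a n ^ 3 + a n ^ (3 - ε))
    {w : ℝ} (hw : Tendsto (fun n => a n ^ ((1 : ℝ) / 3 ^ n)) atTop (𝓝 w)) :
    |w ^ (3 ^ k : ℕ) - a k| ≤ a k ^ (1 - ε) := by
  have hak : 0 < a k := zero_lt_one.trans_le (ha k le_rfl)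
  have hw0 : 0 < w := zero_lt_one.trans_le <| ge_of_tendsto hw <|
    (eventually_ge_atTop k).mono fun n hn => one_le_rpow (ha n hn) (by positivity)
  have hL : Tendsto (fun n => log (a n) / 3 ^ n) atTop (𝓝 (log w)) := by
    refine (hw.log hw0.ne').congr' <| (eventually_ge_atTop k).mono fun n hn => ?_
    rw [log_rpow (zero_lt_one.trans_le (ha n hn))]
    ring
  obtain ⟨hδ_nonneg, hδ_le⟩ := three_pow_mul_limit_bounds hε ha hlow hup hL
  set δ := 3 ^ k * log w - log (a k)
  have hC : a k ^ (-ε) ≤ 1 := rpow_le_one_of_one_le_of_nonpos (ha k le_rfl) (neg_nonpos.mpr hε)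
  have hwpow : w ^ (3 ^ k : ℕ) = a k * exp δ := by
    have hlog : log (a k) + δ = log (w ^ (3 ^ k : ℕ)) := by rw [log_pow]; push_cast; ring
    rw [← exp_log hak, ← exp_add, hlog, exp_log (pow_pos hw0 _)]
  calc |w ^ (3 ^ k : ℕ) - a k| = a k * |exp δ - 1| := by
        rw [hwpow, ← mul_sub_one, abs_mul, abs_of_pos hak]
    _ ≤ a k * (2 * |δ|) := by
        gcongr
        exact abs_exp_sub_one_le (by rw [abs_of_nonneg (by linarith)]; linarith)
    _ ≤ a k * a k ^ (-ε) := by gcongr; rw [abs_of_nonneg (by linarith)]; linarith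
    _ = a k ^ (1 - ε) := by rw [sub_eq_add_neg, rpow_add hak, rpow_one]

end TailEstimate

lemma rpow_neg_le_exp_of_le {c x s : ℝ} (hc : 0 < c) (hcx : c ≤ x) (hs : 0 ≤ s) :
    x ^ (-s) ≤ exp (-(s * log c)) := by
  calc x ^ (-s) ≤ c ^ (-s) := rpow_le_rpow_of_nonpos hc hcx (neg_nonpos.mpr hs)
    _ = exp (-(s * log c)) := by rw [rpow_def_of_pos hc]; ring_nf

open Filter in
theorem stmt3 (p : ℕ → ℤ) (hp : ∀ k ≥ 1, 2 ≤ p k)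
    (hrec : ∀ k ≥ 1, p k ^ 3 ≤ p (k + 1) ∧
      (p (k + 1) : ℝ) ≤ (p k : ℝ) ^ 3 + (p k : ℝ) ^ ((3 : ℝ) * (21 / 40)))
    (w : ℝ) (hw : Tendsto (fun k => (p k : ℝ) ^ ((1 : ℝ) / 3 ^ k)) atTop (nhds w)) :
    ∃ γ > 0, ∃ N : ℕ, ∀ k ≥ N, k ≥ 1 →
      |w ^ (3 ^ k : ℕ) - (p k : ℝ)| ≤ Real.exp (-(3 ^ k * γ)) := by
  have htwo : ∀ n ≥ 1, (2 : ℝ) ≤ p n := fun n hn => by exact_mod_cast hp n hn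
  have hlow : ∀ n ≥ 1, (p n : ℝ) ^ 3 ≤ p (n + 1) := fun n hn => by exact_mod_cast (hrec n hn).1
  have hup : ∀ n ≥ 1, (p (n + 1) : ℝ) ≤ (p n : ℝ) ^ 3 + (p n : ℝ) ^ (3 - 57 / 40 : ℝ) :=
    fun n hn => by convert (hrec n hn).2 using 3; norm_num
  refine ⟨17 * log 2 / 120, by positivity, 0, fun k _ hk => ?_⟩
  obtain ⟨m, rfl⟩ := Nat.exists_eq_add_of_le' hk
  have hgrowth : (2 : ℝ) ^ 3 ^ m ≤ p (1 + m) := pow_three_pow_le zero_le_two (htwo 1 le_rfl) hlow m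
  rw [add_comm] at hgrowth
  calc |w ^ (3 ^ (m + 1) : ℕ) - (p (m + 1) : ℝ)| ≤ (p (m + 1) : ℝ) ^ (1 - 57 / 40 : ℝ) :=
        abs_pow_three_pow_sub_le (by norm_num) (fun n hn => one_le_two.trans (htwo n (hk.trans hn)))
          (fun n hn => hlow n (hk.trans hn)) (fun n hn => hup n (hk.trans hn)) hw
    _ ≤ exp (-(17 / 40 * log (2 ^ 3 ^ m))) := by
        rw [show (1 - 57 / 40 : ℝ) = -(17 / 40) by norm_num]
        exact rpow_neg_le_exp_of_le (by positivity) hgrowth (by norm_num)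
    _ = exp (-(3 ^ (m + 1) * (17 * log 2 / 120))) := by rw [log_pow]; push_cast; ring_nf
end

section
/- Let (c_k)_{k≥1} be a sequence of real numbers with c_k ≥ 1 for all k, set C_k = c_1·…·c_k, and define W(c_k) = {ξ > 1 : ⌊ξ^{C_k}⌋ is prime for every k ≥ 1}. If W(c_k) is non-empty, then W(c_k) has a smallest element. -/
/-!
Let `m` be the infimum of `W`, which is at least `1`. For each `k`, the map `x ↦ x ^ C k` is
monotone and continuous at `m`, and the floor function is right-continuous, so points of `W`
close enough to `m` have the same value `⌊x ^ C k⌋` as `m`; hence `⌊m ^ C k⌋` is prime.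
For `k = 1` this also rules out `m = 1`, since `⌊1 ^ C 1⌋ = 1` is not prime.
-/

open Topology

theorem exists_mem_floor_eq_floor_csInf {α β : Type*} [ConditionallyCompleteLinearOrder α]
    [TopologicalSpace α] [OrderTopology α] [Ring β] [LinearOrder β] [IsStrictOrderedRing β]
    [FloorRing β] [TopologicalSpace β] [OrderTopology β] {S : Set α} (hne : S.Nonempty)
    (hbdd : BddBelow S) {f : α → β} (hf : ∀ x ∈ S, f (sInf S) ≤ f x)
    (hcont : ContinuousAt f (sInf S)) : ∃ x ∈ S, ⌊f x⌋ = ⌊f (sInf S)⌋ := by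
  have hnear : ∀ᶠ x in 𝓝 (sInf S), f x < ⌊f (sInf S)⌋ + 1 :=
    hcont.eventually_lt continuousAt_const (Int.lt_floor_add_one _)
  obtain ⟨x, hx, hlt⟩ :=
    ((mem_closure_iff_frequently.1 (csInf_mem_closure hne hbdd)).and_eventually hnear).exists
  exact ⟨x, hx, Int.floor_eq_iff.2 ⟨(Int.floor_le _).trans (hf x hx), hlt⟩⟩

theorem stmt5 (c : ℕ → ℝ) (hc : ∀ k, 1 ≤ c k)
    (C : ℕ → ℝ) (hC : ∀ k, C k = ∏ i ∈ Finset.Icc 1 k, c i)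
    (W : Set ℝ) (hW : W = {ξ : ℝ | 1 < ξ ∧ ∀ k ≥ 1, Prime ⌊ξ ^ (C k)⌋})
    (hne : W.Nonempty) :
    ∃ ξ ∈ W, ∀ x ∈ W, ξ ≤ x := by
  have hC_nonneg (k : ℕ) : 0 ≤ C k :=
    hC k ▸ Finset.prod_nonneg fun i _ => zero_le_one.trans (hc i)
  have mem_W (ξ : ℝ) := Set.ext_iff.1 hW ξ
  have hbdd : BddBelow W := ⟨1, fun x hx => ((mem_W x).1 hx).1.le⟩
  have hm : 1 ≤ sInf W := le_csInf hne fun x hx => ((mem_W x).1 hx).1.le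
  have hfloor (k : ℕ) (hk : 1 ≤ k) : Prime ⌊sInf W ^ C k⌋ := by
    obtain ⟨x, hx, hfx⟩ := exists_mem_floor_eq_floor_csInf hne hbdd
      (fun x hx => Real.rpow_le_rpow (by linarith) (csInf_le hbdd hx) (hC_nonneg k))
      (Real.continuousAt_rpow_const _ _ (Or.inl (by linarith)))
    exact hfx ▸ ((mem_W x).1 hx).2 k hk
  have hm_ne_one : sInf W ≠ 1 := fun h => by
    simpa [h] using (hfloor 1 le_rfl).ne_one
  have hmem : sInf W ∈ W := (mem_W _).2 ⟨lt_of_le_of_ne hm hm_ne_one.symm, hfloor⟩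
  exact ⟨sInf W, hmem, fun x hx => csInf_le hbdd hx⟩
end

section
/- Let (c_k)_{k≥1} be a sequence of positive integers with c_{k+1} ≥ 2 for all k, set C_k = c_1·…·c_k, let ξ be the smallest element of W(c_k) (assumed to exist and be nonempty), and let p_k = ⌊ξ^{C_k}⌋. Then for all k ≥ 1: p_k^{c_{k+1}} ≤ p_{k+1} < (p_k + 1)^{c_{k+1}} − 1. -/
/-!
Since `C (k+1) = C k * c (k+1)`, `p (k+1) = ⌊y ^ c (k+1)⌋` with `y = ξ ^ C k` and `p k = ⌊y⌋`,
so `p k ^ c (k+1) ≤ p (k+1) < (p k + 1) ^ c (k+1)`. The remaining value `(p k + 1) ^ c (k+1) - 1`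
is a multiple of `p k` exceeding `p k`, hence not prime, while `p (k+1)` is.
-/

section FloorPow

variable {α : Type*} [Ring α] [LinearOrder α] [IsStrictOrderedRing α] [FloorRing α] {x : α}

theorem Int.floor_pow_le_floor_pow (hx : 0 ≤ x) (n : ℕ) : ⌊x⌋ ^ n ≤ ⌊x ^ n⌋ := by
  rw [Int.le_floor, Int.cast_pow]
  exact pow_le_pow_left₀ ((Int.cast_nonneg_iff.mpr (Int.floor_nonneg.mpr hx))) (Int.floor_le x) n

theorem Int.floor_pow_lt_floor_add_one_pow (hx : 0 ≤ x) {n : ℕ} (hn : n ≠ 0) :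
    ⌊x ^ n⌋ < (⌊x⌋ + 1) ^ n := by
  rw [Int.floor_lt, Int.cast_pow, Int.cast_add, Int.cast_one]
  exact pow_lt_pow_left₀ (Int.lt_floor_add_one x) hx hn

end FloorPow

theorem Int.prime_ne_add_one_pow_sub_one {p q : ℤ} (hq : Prime q) (hp : 2 ≤ p) (hpq : p < q)
    (n : ℕ) : q ≠ (p + 1) ^ n - 1 := by
  rintro rfl
  have hdvd : p ∣ (p + 1) ^ n - 1 := by simpa using sub_dvd_pow_sub_pow (p + 1) 1 n
  obtain ⟨m, hm⟩ := hdvd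
  rcases hq.irreducible.isUnit_or_isUnit hm with hu | hu <;> rw [Int.isUnit_iff] at hu
  · omega
  · rcases hu with rfl | rfl <;> omega

theorem Int.two_le_of_prime_of_pos {p : ℤ} (hp : Prime p) (hpos : 0 < p) : 2 ≤ p := by
  have : p ≠ 1 := fun h => hp.not_isUnit (h ▸ isUnit_one)
  omega

theorem stmt6_general (c : ℕ → ℕ) (hc2 : ∀ k ≥ 1, 2 ≤ c (k + 1))
    (C : ℕ → ℕ) (hC : ∀ k, C k = ∏ i ∈ Finset.Icc 1 k, c i)
    (ξ : ℝ) (hξ : 1 < ξ) (hprime : ∀ k ≥ 1, Prime ⌊ξ ^ (C k)⌋)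
    (p : ℕ → ℤ) (hp : ∀ k, p k = ⌊ξ ^ (C k)⌋) :
    ∀ k ≥ 1, p k ^ (c (k + 1)) ≤ p (k + 1) ∧ p (k + 1) < (p k + 1) ^ (c (k + 1)) - 1 := by
  intro k hk
  set y := ξ ^ C k
  have hy : 0 ≤ y := by positivity
  have hnext : p (k + 1) = ⌊y ^ c (k + 1)⌋ := by
    rw [hp, hC, Finset.prod_Icc_succ_top (by omega), ← hC, pow_mul]
  have hpk : 2 ≤ p k := by
    refine Int.two_le_of_prime_of_pos (hp k ▸ hprime k hk) ?_
    rw [hp, Int.floor_pos]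
    exact one_le_pow₀ hξ.le
  have lower : p k ^ c (k + 1) ≤ p (k + 1) := hp k ▸ hnext ▸ Int.floor_pow_le_floor_pow hy _
  have upper : p (k + 1) < (p k + 1) ^ c (k + 1) :=
    hp k ▸ hnext ▸ Int.floor_pow_lt_floor_add_one_pow hy (by have := hc2 k hk; omega)
  have hgrow : p k < p (k + 1) := calc
    p k < p k ^ 2 := by nlinarith
    _ ≤ p k ^ c (k + 1) := pow_le_pow_right₀ (by omega) (hc2 k hk)
    _ ≤ p (k + 1) := lower
  have hne := Int.prime_ne_add_one_pow_sub_one (hp (k + 1) ▸ hprime (k + 1) (by omega)) hpk hgrow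
    (c (k + 1))
  exact ⟨lower, by omega⟩

theorem stmt6 (c : ℕ → ℕ) (hc : ∀ k, 1 ≤ c k) (hc2 : ∀ k ≥ 1, 2 ≤ c (k + 1))
    (C : ℕ → ℕ) (hC : ∀ k, C k = ∏ i ∈ Finset.Icc 1 k, c i)
    (ξ : ℝ) (hξ : 1 < ξ) (hprime : ∀ k ≥ 1, Prime ⌊ξ ^ (C k)⌋)
    (hmin : ∀ x : ℝ, 1 < x → (∀ k ≥ 1, Prime ⌊x ^ (C k)⌋) → ξ ≤ x)
    (p : ℕ → ℤ) (hp : ∀ k, p k = ⌊ξ ^ (C k)⌋) :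
    ∀ k ≥ 1, p k ^ (c (k + 1)) ≤ p (k + 1) ∧ p (k + 1) < (p k + 1) ^ (c (k + 1)) - 1 :=
  stmt6_general c hc2 C hC ξ hξ hprime p hp
end
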